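/- arXiv:2012.03092 — 2 statements merged into one kernel-verified Lean document; each statement's English description precedes it below -/
import Mathlib

section
/- Let 𝒜 ∈ ℝ^{n₁×n₂×n₃} be nonzero, and let (x₁⁰, x₂⁰, x₃⁰) be generated by Algorithm A: x₃⁰ is the normalized truncation (to r₃ largest-magnitude entries) of the mode-3 fiber 𝒜(ī₁, ī₂, :) of largest truncated norm; x₂⁰ is the normalized r₂-truncation of 𝒜(e₁^{ī₁}, ·, x₃⁰); x₁⁰ is the normalized r₁-truncation of 𝒜(·, x₂⁰, x₃⁰). Then 𝒜(x₁⁰, x₂⁰, x₃⁰) ≥ v_opt / √(r₁ r₂), where v_opt is the maximum of 𝒜(x₁, x₂, x₃) over unit vectors x_j with ‖x_j‖₀ ≤ r_j. -/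
open Finset

noncomputable def enorm' {ι : Type*} [Fintype ι] (x : ι → ℝ) : ℝ :=
  Real.sqrt (∑ i, x i ^ 2)

def dot {ι : Type*} [Fintype ι] (x y : ι → ℝ) : ℝ := ∑ i, x i * y i

noncomputable def l0 {ι : Type*} [Fintype ι] (x : ι → ℝ) : ℕ :=
  (Finset.univ.filter fun i => x i ≠ 0).card

def IsTrunc {ι : Type*} [Fintype ι] [DecidableEq ι] (a : ι → ℝ) (r : ℕ) (ar : ι → ℝ) : Prop :=
  ∃ S : Finset ι, S.card = r ∧ (∀ i ∈ S, ar i = a i) ∧ (∀ i ∉ S, ar i = 0) ∧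
    ∀ i ∈ S, ∀ j ∉ S, |a j| ≤ |a i|

noncomputable def lmax {m n' : Type*} [Fintype m] [Fintype n'] (A : Matrix m n' ℝ) : ℝ :=
  sSup {c | ∃ x : n' → ℝ, enorm' x = 1 ∧ c = enorm' (A.mulVec x)}

noncomputable def fnorm {m n' : Type*} [Fintype m] [Fintype n'] (A : Matrix m n' ℝ) : ℝ :=
  Real.sqrt (∑ i, ∑ j, A i j ^ 2)

def tri {n1 n2 n3 : ℕ} (A : Fin n1 → Fin n2 → Fin n3 → ℝ)
    (x : Fin n1 → ℝ) (y : Fin n2 → ℝ) (z : Fin n3 → ℝ) : ℝ :=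
  ∑ i, ∑ j, ∑ k, A i j k * x i * y j * z k

def mlin {d : ℕ} {n : Fin d → ℕ} (A : (∀ j, Fin (n j)) → ℝ)
    (x : ∀ j, Fin (n j) → ℝ) : ℝ :=
  ∑ i, A i * ∏ j, x j (i j)

/-! Let `M` be the largest norm of an `r₃`-truncated mode-3 fiber. For an `r₃`-sparse unit `y₃`,
each `|𝒜(i, j, y₃)|` is at most the truncated norm of the fiber `𝒜(i, j, :)`, hence at most `M`;
an `r`-sparse unit vector has `ℓ¹`-norm at most `√r`, so `𝒜(y₁, y₂, y₃) ≤ √(r₁ r₂) M`.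
Conversely, each normalized truncation step of the algorithm returns the norm of the truncated
vector, which dominates every entry, in particular the value reached at the previous step; thus
`M ≤ ‖t₂‖ ≤ ‖t₁‖ = 𝒜(x₁, x₂, x₃)`. -/

namespace Finset

variable {ι M : Type*} [DecidableEq ι] [AddCommMonoid M] [LinearOrder M] [IsOrderedAddMonoid M]

theorem sum_le_sum_of_card_le_of_forall_le {f : ι → M} {Q S : Finset ι} (hQS : #Q ≤ #S)
    (hf : ∀ i ∈ S, 0 ≤ f i) (hdom : ∀ i ∈ S, ∀ j ∉ S, f j ≤ f i) :
    ∑ i ∈ Q, f i ≤ ∑ i ∈ S, f i := by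
  rw [← sum_inter_add_sum_sdiff Q S, ← sum_inter_add_sum_sdiff S Q, inter_comm]
  refine add_le_add le_rfl ?_
  have hcard : #(Q \ S) ≤ #(S \ Q) := by
    have := card_sdiff_add_card_inter Q S
    have := card_sdiff_add_card_inter S Q
    rw [inter_comm Q S] at *
    omega
  obtain hSQ | hSQ := (S \ Q).eq_empty_or_nonempty
  · rw [card_eq_zero.mp (Nat.le_zero.mp (hcard.trans_eq (card_eq_zero.mpr hSQ))), sum_empty]
    exact sum_nonneg fun i hi => hf i (mem_sdiff.mp hi).1
  obtain ⟨i₀, hi₀, hmin⟩ := exists_min_image (S \ Q) f hSQ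
  have hi₀S := (mem_sdiff.mp hi₀).1
  calc ∑ i ∈ Q \ S, f i ≤ #(Q \ S) • f i₀ :=
        sum_le_card_nsmul _ _ _ fun j hj => hdom i₀ hi₀S j (mem_sdiff.mp hj).2
    _ ≤ #(S \ Q) • f i₀ := nsmul_le_nsmul_left (hf i₀ hi₀S) hcard
    _ ≤ ∑ i ∈ S \ Q, f i := card_nsmul_le_sum _ _ _ hmin

end Finset

open Finset

section

variable {ι : Type*} [Fintype ι]

theorem enorm'_nonneg (x : ι → ℝ) : 0 ≤ enorm' x := Real.sqrt_nonneg _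

theorem enorm'_sq (x : ι → ℝ) : enorm' x ^ 2 = ∑ i, x i ^ 2 :=
  Real.sq_sqrt (sum_nonneg fun _ _ => sq_nonneg _)

theorem abs_le_enorm' (x : ι → ℝ) (i : ι) : |x i| ≤ enorm' x :=
  Real.abs_le_sqrt (single_le_sum (f := fun j => x j ^ 2) (fun _ _ => sq_nonneg _) (mem_univ i))

theorem sum_mul_eq_sum_support (c y : ι → ℝ) :
    ∑ i, c i * y i = ∑ i with y i ≠ 0, c i * y i :=
  (sum_filter_of_ne fun _ _ h => right_ne_zero_of_mul h).symm

theorem sum_abs_le_sqrt_l0_mul_enorm' (y : ι → ℝ) : ∑ i, |y i| ≤ √(l0 y) * enorm' y := by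
  rw [← Real.sqrt_sq (enorm'_nonneg y), ← Real.sqrt_mul (Nat.cast_nonneg _), enorm'_sq,
    Real.le_sqrt (sum_nonneg fun i _ => abs_nonneg _) (by positivity),
    ← sum_filter_of_ne fun i _ h => abs_ne_zero.mp h]
  calc (∑ i with y i ≠ 0, |y i|) ^ 2 ≤ #{i | y i ≠ 0} * ∑ i with y i ≠ 0, |y i| ^ 2 :=
        sq_sum_le_card_mul_sum_sq
    _ ≤ l0 y * ∑ i, y i ^ 2 := by
        simp only [sq_abs]
        exact mul_le_mul_of_nonneg_left
          (sum_le_sum_of_subset_of_nonneg (subset_univ _) fun i _ _ => sq_nonneg _) (by positivity)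

theorem abs_sum_mul_le_sqrt_mul {c y : ι → ℝ} {r : ℕ} {C : ℝ} (hc : ∀ i, |c i| ≤ C) (hC : 0 ≤ C)
    (hy : enorm' y = 1) (hl : l0 y ≤ r) : |∑ i, c i * y i| ≤ √r * C :=
  calc |∑ i, c i * y i| ≤ ∑ i, C * |y i| :=
        (abs_sum_le_sum_abs _ _).trans <| sum_le_sum fun i _ => by
          rw [abs_mul]; exact mul_le_mul_of_nonneg_right (hc i) (abs_nonneg _)
    _ ≤ C * (√(l0 y) * enorm' y) := by
        rw [← mul_sum]; exact mul_le_mul_of_nonneg_left (sum_abs_le_sqrt_l0_mul_enorm' y) hC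
    _ ≤ √r * C := by
        rw [hy, mul_one, mul_comm]
        exact mul_le_mul_of_nonneg_right (Real.sqrt_le_sqrt (by exact_mod_cast hl)) hC

namespace IsTrunc

variable [DecidableEq ι] {a ar : ι → ℝ} {r : ℕ}

theorem sum_mul_self (h : IsTrunc a r ar) : ∑ i, a i * ar i = enorm' ar ^ 2 := by
  obtain ⟨S, -, hon, hoff, -⟩ := h
  rw [enorm'_sq]
  refine sum_congr rfl fun i _ => ?_
  by_cases hi : i ∈ S
  · rw [hon i hi, sq]
  · rw [hoff i hi]; ring

/-- Also true when `ar = 0`, since then both sides vanish (`x / 0 = 0`). -/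
theorem sum_mul_div_enorm' (h : IsTrunc a r ar) : ∑ i, a i * (ar i / enorm' ar) = enorm' ar := by
  simp_rw [← mul_div_assoc]
  rw [← sum_div, h.sum_mul_self, sq, mul_self_div_self]

theorem abs_le_enorm' (h : IsTrunc a r ar) (hr : 1 ≤ r) (i : ι) : |a i| ≤ enorm' ar := by
  obtain ⟨S, hcard, hon, -, hdom⟩ := h
  have hS : ∀ j ∈ S, |a j| ≤ enorm' ar := fun j hj => hon j hj ▸ _root_.abs_le_enorm' ar j
  by_cases hi : i ∈ S
  · exact hS i hi
  · obtain ⟨j, hj⟩ := card_pos.mp (hcard ▸ hr)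
    exact (hdom j hj i hi).trans (hS j hj)

theorem abs_sum_mul_le {y : ι → ℝ} (h : IsTrunc a r ar) (hl : l0 y ≤ r) :
    |∑ i, a i * y i| ≤ enorm' ar * enorm' y := by
  obtain ⟨S, hcard, hon, -, hdom⟩ := h
  have haS : ∑ i with y i ≠ 0, a i ^ 2 ≤ enorm' ar ^ 2 :=
    calc ∑ i with y i ≠ 0, a i ^ 2 ≤ ∑ i ∈ S, a i ^ 2 :=
          sum_le_sum_of_card_le_of_forall_le (hcard ▸ hl) (fun i _ => sq_nonneg _)
            fun i hi j hj => sq_le_sq.mpr (hdom i hi j hj)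
      _ = ∑ i ∈ S, ar i ^ 2 := sum_congr rfl fun i hi => by rw [hon i hi]
      _ ≤ enorm' ar ^ 2 := by
          rw [enorm'_sq]
          exact sum_le_sum_of_subset_of_nonneg (subset_univ _) fun i _ _ => sq_nonneg _
  refine abs_le_of_sq_le_sq ?_ (mul_nonneg (enorm'_nonneg ar) (enorm'_nonneg y))
  rw [sum_mul_eq_sum_support, mul_pow, enorm'_sq y]
  calc (∑ i with y i ≠ 0, a i * y i) ^ 2
      ≤ (∑ i with y i ≠ 0, a i ^ 2) * ∑ i with y i ≠ 0, y i ^ 2 := sum_mul_sq_le_sq_mul_sq _ _ _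
    _ ≤ enorm' ar ^ 2 * ∑ i, y i ^ 2 :=
        mul_le_mul haS (sum_le_sum_of_subset_of_nonneg (subset_univ _) fun i _ _ => sq_nonneg _)
          (sum_nonneg fun i _ => sq_nonneg _) (sq_nonneg _)

end IsTrunc

end

section Trilinear

variable {n1 n2 n3 : ℕ} (A : Fin n1 → Fin n2 → Fin n3 → ℝ)

theorem sum_sum_mul_mul_eq (i : Fin n1) (y : Fin n2 → ℝ) (z : Fin n3 → ℝ) :
    ∑ j, ∑ k, A i j k * y j * z k = ∑ j, (∑ k, A i j k * z k) * y j := by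
  simp_rw [sum_mul]
  exact sum_congr rfl fun _ _ => sum_congr rfl fun _ _ => by ring

theorem tri_eq_sum (x : Fin n1 → ℝ) (y : Fin n2 → ℝ) (z : Fin n3 → ℝ) :
    tri A x y z = ∑ i, (∑ j, ∑ k, A i j k * y j * z k) * x i := by
  simp_rw [tri, sum_mul]
  exact sum_congr rfl fun _ _ => sum_congr rfl fun _ _ => sum_congr rfl fun _ _ => by ring

theorem abs_tri_le_sqrt_mul {r1 r2 : ℕ} {M : ℝ} {y1 : Fin n1 → ℝ} {y2 : Fin n2 → ℝ}
    {y3 : Fin n3 → ℝ} (hM : ∀ i j, |∑ k, A i j k * y3 k| ≤ M) (hM0 : 0 ≤ M)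
    (hy1 : enorm' y1 = 1) (hl1 : l0 y1 ≤ r1) (hy2 : enorm' y2 = 1) (hl2 : l0 y2 ≤ r2) :
    |tri A y1 y2 y3| ≤ √((r1 : ℝ) * r2) * M := by
  have hrow : ∀ i, |∑ j, ∑ k, A i j k * y2 j * y3 k| ≤ √r2 * M := fun i => by
    rw [sum_sum_mul_mul_eq]
    exact abs_sum_mul_le_sqrt_mul (hM i) hM0 hy2 hl2
  rw [tri_eq_sum, Real.sqrt_mul (Nat.cast_nonneg _), mul_assoc]
  exact abs_sum_mul_le_sqrt_mul hrow (by positivity) hy1 hl1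

end Trilinear

theorem stmt_8_general {n1 n2 n3 : ℕ} (A : Fin n1 → Fin n2 → Fin n3 → ℝ)
    (r1 r2 r3 : ℕ) (hr1 : 1 ≤ r1 ∧ r1 ≤ n1) (hr2 : 1 ≤ r2 ∧ r2 ≤ n2)
    -- step 1: truncations of all mode-3 fibers
    (T : Fin n1 → Fin n2 → Fin n3 → ℝ)
    (hT : ∀ i1 i2, IsTrunc (fun k => A i1 i2 k) r3 (T i1 i2))
    -- step 2: select the fiber with largest truncated norm
    (i1b : Fin n1) (i2b : Fin n2)
    (hsel : ∀ i1 i2, enorm' (T i1 i2) ≤ enorm' (T i1b i2b))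
    (x3 : Fin n3 → ℝ) (hx3 : x3 = fun k => T i1b i2b k / enorm' (T i1b i2b))
    -- step 3: sequential truncated updates
    (t2 : Fin n2 → ℝ) (ht2 : IsTrunc (fun j => ∑ k, A i1b j k * x3 k) r2 t2)
    (x2 : Fin n2 → ℝ) (hx2 : x2 = fun j => t2 j / enorm' t2)
    (t1 : Fin n1 → ℝ) (ht1 : IsTrunc (fun i => ∑ j, ∑ k, A i j k * x2 j * x3 k) r1 t1)
    (x1 : Fin n1 → ℝ) (hx1 : x1 = fun i => t1 i / enorm' t1) :
    ∀ y1 y2 y3, enorm' y1 = 1 → l0 y1 ≤ r1 → enorm' y2 = 1 → l0 y2 ≤ r2 →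
      enorm' y3 = 1 → l0 y3 ≤ r3 →
      tri A y1 y2 y3 ≤ Real.sqrt ((r1 : ℝ) * r2) * tri A x1 x2 x3 := by
  intro y1 y2 y3 hy1 hl1 hy2 hl2 hy3 hl3
  set M := enorm' (T i1b i2b)
  have hfiber : ∀ i j, |∑ k, A i j k * y3 k| ≤ M := fun i j =>
    ((hT i j).abs_sum_mul_le hl3).trans_eq (by rw [hy3, mul_one]) |>.trans (hsel i j)
  have hMx : M ≤ tri A x1 x2 x3 :=
    calc M = ∑ k, A i1b i2b k * x3 k := by rw [hx3]; exact (hT i1b i2b).sum_mul_div_enorm'.symm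
      _ ≤ enorm' t2 := (le_abs_self _).trans (ht2.abs_le_enorm' hr2.1 i2b)
      _ = ∑ j, ∑ k, A i1b j k * x2 j * x3 k := by
          rw [sum_sum_mul_mul_eq, hx2]; exact ht2.sum_mul_div_enorm'.symm
      _ ≤ enorm' t1 := (le_abs_self _).trans (ht1.abs_le_enorm' hr1.1 i1b)
      _ = tri A x1 x2 x3 := by rw [tri_eq_sum, hx1]; exact ht1.sum_mul_div_enorm'.symm
  calc tri A y1 y2 y3 ≤ √((r1 : ℝ) * r2) * M :=
        (le_abs_self _).trans (abs_tri_le_sqrt_mul A hfiber (enorm'_nonneg _) hy1 hl1 hy2 hl2)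
    _ ≤ √((r1 : ℝ) * r2) * tri A x1 x2 x3 := by gcongr

/-- Theorem 3.1: approximation bound of Algorithm A for d = 3:
𝒜(x₁⁰,x₂⁰,x₃⁰) ≥ v_opt/√(r₁r₂). -/
theorem stmt_8 {n1 n2 n3 : ℕ} (A : Fin n1 → Fin n2 → Fin n3 → ℝ) (hA : A ≠ 0)
    (r1 r2 r3 : ℕ) (hr1 : 1 ≤ r1 ∧ r1 ≤ n1) (hr2 : 1 ≤ r2 ∧ r2 ≤ n2)
    (hr3 : 1 ≤ r3 ∧ r3 ≤ n3)
    -- step 1: truncations of all mode-3 fibers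
    (T : Fin n1 → Fin n2 → Fin n3 → ℝ)
    (hT : ∀ i1 i2, IsTrunc (fun k => A i1 i2 k) r3 (T i1 i2))
    -- step 2: select the fiber with largest truncated norm
    (i1b : Fin n1) (i2b : Fin n2)
    (hsel : ∀ i1 i2, enorm' (T i1 i2) ≤ enorm' (T i1b i2b))
    (x3 : Fin n3 → ℝ) (hx3 : x3 = fun k => T i1b i2b k / enorm' (T i1b i2b))
    -- step 3: sequential truncated updates
    (t2 : Fin n2 → ℝ) (ht2 : IsTrunc (fun j => ∑ k, A i1b j k * x3 k) r2 t2)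
    (x2 : Fin n2 → ℝ) (hx2 : x2 = fun j => t2 j / enorm' t2)
    (t1 : Fin n1 → ℝ) (ht1 : IsTrunc (fun i => ∑ j, ∑ k, A i j k * x2 j * x3 k) r1 t1)
    (x1 : Fin n1 → ℝ) (hx1 : x1 = fun i => t1 i / enorm' t1) :
    ∀ y1 y2 y3, enorm' y1 = 1 → l0 y1 ≤ r1 → enorm' y2 = 1 → l0 y2 ≤ r2 →
      enorm' y3 = 1 → l0 y3 ≤ r3 →
      tri A y1 y2 y3 ≤ Real.sqrt ((r1 : ℝ) * r2) * tri A x1 x2 x3 :=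
  stmt_8_general A r1 r2 r3 hr1 hr2 T hT i1b i2b hsel x3 hx3 t2 ht2 x2 hx2 t1 ht1 x1 hx1
end

section
/- For any matrix A ∈ ℝ^{m×n} and any unit vector x ∈ ℝ^m that is the normalized r-truncation of the leading left singular vector of A, one has ‖Aᵀx‖ ≥ √(r/m²)·‖A‖_F. -/
open Finset

/-! The leading left singular vector `x̄` is a top eigenvector of `A Aᵀ`: the quadratic form
`w ↦ λ² ‖w‖² - ‖Aᵀ w‖²` is nonnegative and vanishes at `x̄`, so its polar form vanishes there
too, i.e. `⟪Aᵀ x̄, Aᵀ y⟫ = λ² ⟪x̄, y⟫` for all `y`. For the truncation `x_r` we have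
`⟪x̄, x_r⟫ = ‖x_r‖²`, hence Cauchy–Schwarz gives `λ ‖x_r‖² ≤ ‖Aᵀ x_r‖`, that is
`λ ‖x_r‖ ≤ ‖Aᵀ x‖`. The `r` largest squared entries of a unit vector in `ℝᵐ` sum to at least
`r / m`, and every row of `A` has norm at most `λ`, so `‖A‖_F ≤ √m λ`. -/

open scoped RealInnerProductSpace Matrix

namespace ContinuousLinearMap

variable {E F : Type*} [NormedAddCommGroup E] [InnerProductSpace ℝ E]
  [NormedAddCommGroup F] [InnerProductSpace ℝ F]

theorem inner_apply_apply_eq_of_norm_apply_eq_opNorm (T : E →L[ℝ] F) {u : E} (hu : ‖u‖ = 1)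
    (hTu : ‖T u‖ = ‖T‖) (y : E) : ⟪T u, T y⟫ = ‖T‖ ^ 2 * ⟪u, y⟫ := by
  -- `‖T‖² ‖w‖² - ‖T w‖² ≥ 0` vanishes at `w = u`, so its slope there along `y` is zero.
  have hquad : ∀ t : ℝ, 0 ≤ (‖T‖ ^ 2 * ‖y‖ ^ 2 - ‖T y‖ ^ 2) * (t * t)
      + 2 * (‖T‖ ^ 2 * ⟪u, y⟫ - ⟪T u, T y⟫) * t + 0 := by
    intro t
    have hle : ‖T (u + t • y)‖ ^ 2 ≤ (‖T‖ * ‖u + t • y‖) ^ 2 := by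
      gcongr; exact T.le_opNorm _
    rw [map_add, map_smul, mul_pow, norm_add_sq_real, norm_add_sq_real, norm_smul, norm_smul,
      inner_smul_right, inner_smul_right, hu, hTu, Real.norm_eq_abs, mul_pow, mul_pow |t|,
      sq_abs] at hle
    linear_combination hle
  have h := discrim_le_zero hquad
  rw [discrim] at h
  nlinarith [sq_nonneg (‖T‖ ^ 2 * ⟪u, y⟫ - ⟪T u, T y⟫)]

theorem opNorm_mul_norm_sq_le_of_norm_apply_eq_opNorm (T : E →L[ℝ] F) {u : E} (hu : ‖u‖ = 1)
    (hTu : ‖T u‖ = ‖T‖) {y : E} (hy : ⟪u, y⟫ = ‖y‖ ^ 2) : ‖T‖ * ‖y‖ ^ 2 ≤ ‖T y‖ := by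
  rcases (norm_nonneg T).eq_or_lt with hT | hT
  · rw [← hT, zero_mul]; exact norm_nonneg _
  refine le_of_mul_le_mul_left ?_ hT
  calc ‖T‖ * (‖T‖ * ‖y‖ ^ 2) = ⟪T u, T y⟫ := by
        rw [T.inner_apply_apply_eq_of_norm_apply_eq_opNorm hu hTu, hy]; ring
    _ ≤ ‖T u‖ * ‖T y‖ := real_inner_le_norm _ _
    _ = ‖T‖ * ‖T y‖ := by rw [hTu]

theorem opNorm_mul_norm_le_norm_apply_inv_norm_smul (T : E →L[ℝ] F) {u : E} (hu : ‖u‖ = 1)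
    (hTu : ‖T u‖ = ‖T‖) {y : E} (hy : ⟪u, y⟫ = ‖y‖ ^ 2) : ‖T‖ * ‖y‖ ≤ ‖T (‖y‖⁻¹ • y)‖ := by
  rcases (norm_nonneg y).eq_or_lt with hy0 | hy0
  · rw [← hy0, mul_zero]; exact norm_nonneg _
  have h := T.opNorm_mul_norm_sq_le_of_norm_apply_eq_opNorm hu hTu hy
  rw [map_smul, norm_smul, norm_inv, norm_norm, le_inv_mul_iff₀ hy0]
  linarith

end ContinuousLinearMap

section Truncation

variable {ι : Type*} [Fintype ι] [DecidableEq ι] {a ar : ι → ℝ} {r : ℕ}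

theorem IsTrunc.inner_toLp_eq_norm_sq (h : IsTrunc a r ar) :
    ⟪(WithLp.toLp 2 a : EuclideanSpace ℝ ι), WithLp.toLp 2 ar⟫
      = ‖(WithLp.toLp 2 ar : EuclideanSpace ℝ ι)‖ ^ 2 := by
  obtain ⟨S, -, hin, hout, -⟩ := h
  rw [EuclideanSpace.real_norm_sq_eq, EuclideanSpace.inner_toLp_toLp]
  refine Finset.sum_congr rfl fun i _ => ?_
  by_cases hi : i ∈ S
  · simp [hin i hi, sq]
  · simp [hout i hi]

theorem IsTrunc.mul_norm_sq_le (h : IsTrunc a r ar) :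
    r * ‖(WithLp.toLp 2 a : EuclideanSpace ℝ ι)‖ ^ 2
      ≤ Fintype.card ι * ‖(WithLp.toLp 2 ar : EuclideanSpace ℝ ι)‖ ^ 2 := by
  simp only [EuclideanSpace.real_norm_sq_eq]
  obtain ⟨S, rfl, hin, hout, hmax⟩ := h
  have hsum : ∑ i, ar i ^ 2 = ∑ i ∈ S, a i ^ 2 := by
    rw [← Finset.sum_subset S.subset_univ fun i _ hi => by simp [hout i hi]]
    exact Finset.sum_congr rfl fun i hi => by rw [hin i hi]
  have hpair : (S.card : ℝ) * ∑ j ∈ Sᶜ, a j ^ 2 ≤ Sᶜ.card * ∑ i ∈ S, a i ^ 2 :=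
    calc (S.card : ℝ) * ∑ j ∈ Sᶜ, a j ^ 2 = ∑ _i ∈ S, ∑ j ∈ Sᶜ, a j ^ 2 := by
          rw [Finset.sum_const, nsmul_eq_mul]
      _ ≤ ∑ i ∈ S, ∑ _j ∈ Sᶜ, a i ^ 2 := Finset.sum_le_sum fun i hi => Finset.sum_le_sum
          fun j hj => sq_le_sq.mpr (hmax i hi j (Finset.mem_compl.mp hj))
      _ = Sᶜ.card * ∑ i ∈ S, a i ^ 2 := by
          simp only [Finset.sum_const, nsmul_eq_mul, Finset.mul_sum]
  have hcard : (S.card : ℝ) + Sᶜ.card = Fintype.card ι := by exact_mod_cast S.card_add_card_compl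
  rw [hsum, ← Finset.sum_add_sum_compl S, ← hcard]
  linarith

end Truncation

theorem enorm'_eq_norm {ι : Type*} [Fintype ι] (x : ι → ℝ) :
    enorm' x = ‖(WithLp.toLp 2 x : EuclideanSpace ℝ ι)‖ := by
  simp [enorm', EuclideanSpace.norm_eq]

section OperatorNorm

open scoped Matrix.Norms.L2Operator

variable {m n : Type*} [Fintype m] [Fintype n] [DecidableEq n]

theorem lmax_eq_l2_opNorm (A : Matrix m n ℝ) : lmax A = ‖A‖ := by
  rw [lmax, Matrix.l2_opNorm_def, ← ContinuousLinearMap.sSup_sphere_eq_norm]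
  congr 1
  ext c
  simp only [Set.mem_ofPred_eq, Set.mem_image, mem_sphere_zero_iff_norm]
  constructor
  · rintro ⟨x, hx, rfl⟩
    exact ⟨WithLp.toLp 2 x, by rwa [← enorm'_eq_norm], by rw [enorm'_eq_norm]; rfl⟩
  · rintro ⟨v, hv, rfl⟩
    exact ⟨WithLp.ofLp v, by rwa [enorm'_eq_norm], by rw [enorm'_eq_norm]; rfl⟩

theorem lmax_eq_opNorm_transpose [DecidableEq m] (A : Matrix m n ℝ) :
    lmax A = ‖(Matrix.toEuclideanLin Aᵀ).toContinuousLinearMap‖ := by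
  rw [lmax_eq_l2_opNorm, ← Matrix.l2_opNorm_conjTranspose,
    Matrix.conjTranspose_eq_transpose_of_trivial]
  rfl

end OperatorNorm

theorem fnorm_le_sqrt_card_mul_lmax {m n : Type*} [Fintype m] [Fintype n] [DecidableEq m]
    [DecidableEq n] (A : Matrix m n ℝ) : fnorm A ≤ √(Fintype.card m) * lmax A := by
  set T := (Matrix.toEuclideanLin Aᵀ).toContinuousLinearMap
  have hL : 0 ≤ lmax A := lmax_eq_opNorm_transpose A ▸ norm_nonneg T
  have hrow : ∀ i, ∑ j, A i j ^ 2 ≤ lmax A ^ 2 := by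
    intro i
    have hTi : T (EuclideanSpace.single i 1) = WithLp.toLp 2 (A i) := by
      ext j; simp [T, Matrix.toLpLin_apply]
    have h := T.le_opNorm (EuclideanSpace.single i 1)
    rw [← lmax_eq_opNorm_transpose, PiLp.norm_single, norm_one, mul_one, hTi] at h
    calc ∑ j, A i j ^ 2 = ‖WithLp.toLp 2 (A i)‖ ^ 2 := by
          simp [EuclideanSpace.real_norm_sq_eq]
      _ ≤ lmax A ^ 2 := pow_le_pow_left₀ (norm_nonneg _) h 2
  calc fnorm A ≤ √(Fintype.card m * lmax A ^ 2) := by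
        refine Real.sqrt_le_sqrt ?_
        simpa using Finset.sum_le_sum fun i (_ : i ∈ Finset.univ) => hrow i
    _ = √(Fintype.card m) * lmax A := by rw [Real.sqrt_mul (Nat.cast_nonneg _), Real.sqrt_sq hL]

theorem stmt_13_general {m n : ℕ} (A : Matrix (Fin m) (Fin n) ℝ)
    (xb : Fin m → ℝ) (hxb : enorm' xb = 1)
    (hlead : enorm' (A.transpose.mulVec xb) = lmax A)
    (r : ℕ)
    (xr : Fin m → ℝ) (htr : IsTrunc xb r xr)
    (x : Fin m → ℝ) (hx : x = fun i => xr i / enorm' xr) :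
    enorm' (A.transpose.mulVec x) ≥ Real.sqrt ((r : ℝ) / (m : ℝ) ^ 2) * fnorm A := by
  set T := (Matrix.toEuclideanLin Aᵀ).toContinuousLinearMap
  set u : EuclideanSpace ℝ (Fin m) := WithLp.toLp 2 xb
  set y : EuclideanSpace ℝ (Fin m) := WithLp.toLp 2 xr
  have hmulVec : ∀ v, enorm' (Aᵀ *ᵥ v) = ‖T (WithLp.toLp 2 v)‖ := fun v => enorm'_eq_norm _
  have hu : ‖u‖ = 1 := by rw [← enorm'_eq_norm, hxb]
  have hTu : ‖T u‖ = ‖T‖ := by rw [← hmulVec, hlead, lmax_eq_opNorm_transpose]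
  have hx' : WithLp.toLp 2 x = ‖y‖⁻¹ • y := by
    ext i; simp [hx, y, enorm'_eq_norm, div_eq_inv_mul]
  have hm : (0 : ℝ) < m :=
    Nat.cast_pos.mpr (Nat.pos_of_ne_zero (by rintro rfl; simp [enorm'] at hxb))
  have hry : (r : ℝ) / m ≤ ‖y‖ ^ 2 := by
    rw [div_le_iff₀' hm]
    have h : (r : ℝ) * ‖u‖ ^ 2 ≤ m * ‖y‖ ^ 2 := by simpa using htr.mul_norm_sq_le
    rwa [hu, one_pow, mul_one] at h
  have hF : fnorm A ≤ √m * ‖T‖ := by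
    simpa [lmax_eq_opNorm_transpose] using fnorm_le_sqrt_card_mul_lmax A
  rw [ge_iff_le, hmulVec, hx']
  calc √(r / m ^ 2) * fnorm A ≤ √(r / m ^ 2) * (√m * ‖T‖) := by gcongr
    _ = ‖T‖ * √(r / m) := by
      rw [← mul_assoc, ← Real.sqrt_mul (by positivity), mul_comm]
      field_simp
    _ ≤ ‖T‖ * ‖y‖ := by
      gcongr
      exact Real.sqrt_le_iff.mpr ⟨norm_nonneg _, hry⟩
    _ ≤ ‖T (‖y‖⁻¹ • y)‖ :=
      T.opNorm_mul_norm_le_norm_apply_inv_norm_smul hu hTu htr.inner_toLp_eq_norm_sq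

/-- If x is the normalized r-truncation of the leading left singular vector
of A, then ‖Aᵀx‖ ≥ √(r/m²)·‖A‖_F. -/
theorem stmt_13 {m n : ℕ} (A : Matrix (Fin m) (Fin n) ℝ) (hA : A ≠ 0)
    (xb : Fin m → ℝ) (hxb : enorm' xb = 1)
    (hlead : enorm' (A.transpose.mulVec xb) = lmax A)
    (r : ℕ) (hr1 : 1 ≤ r) (hrm : r ≤ m)
    (xr : Fin m → ℝ) (htr : IsTrunc xb r xr)
    (x : Fin m → ℝ) (hx : x = fun i => xr i / enorm' xr) :
    enorm' (A.transpose.mulVec x) ≥ Real.sqrt ((r : ℝ) / (m : ℝ) ^ 2) * fnorm A :=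
  stmt_13_general A xb hxb hlead r xr htr x hx
end
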